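/- arXiv:0912.0505 — 3 statements merged into one kernel-verified Lean document; each statement's English description precedes it below -/
import Mathlib

section
/- Let d ≥ 2. The map (c; a; z) ↦ G_{ρ(c;a)}(z) is continuous on H × ℂ × ℂ, where H = {c = (c₁,…,c_{d−1}) ∈ ℂ^{d−1} : c₁ + ⋯ + c_{d−1} = 0}. In particular the marked critical heights map 𝒢^×(c; a) = (G_f(c₁),…,G_f(c_{d−1})), f = ρ(c;a), is continuous on H × ℂ. -/
/-- The escape rate `G_f(z) = lim_{n→∞} d⁻ⁿ · log⁺ |fⁿ(z)|` of a polynomial `f`,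
where `d = deg f` and `log⁺ t = log (max t 1)`. -/
noncomputable def escapeRate (f : Polynomial ℂ) (z : ℂ) : ℝ :=
  Filter.limUnder Filter.atTop (fun n : ℕ =>
    ((f.natDegree : ℝ)⁻¹) ^ n * Real.log (max ‖(fun w => f.eval w)^[n] z‖ 1))
/-- The monic centered polynomial `ρ(c; a)(z) = ∫₀ᶻ d·∏ᵢ (ζ − cᵢ) dζ + a`,
with critical points `c₁, …, c_{d−1}` and `ρ(c;a)(0) = a`. -/
noncomputable def rho (d : ℕ) (c : Fin (d - 1) → ℂ) (a : ℂ) : Polynomial ℂ :=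
  (Polynomial.C (d : ℂ) * ∏ i : Fin (d - 1), (Polynomial.X - Polynomial.C (c i))).sum
    (fun k b => Polynomial.C (b / ((k : ℂ) + 1)) * Polynomial.X ^ (k + 1)) + Polynomial.C a

/-
The escape rate is the limit of `gₙ(z) = d⁻ⁿ log⁺ |fⁿ(z)|`. For a monic polynomial `f` of degree
`d ≥ 1` one has `|log⁺ |f(z)| - d log⁺ |z|| ≤ C(f)`, where `C(f)` depends continuously on the
coefficients of `f`; applied at `w = fⁿ(z)` this gives `|gₙ₊₁ - gₙ| ≤ C(f) d⁻ⁿ⁻¹`. Hence, for a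
family of monic degree-`d` polynomials with continuous coefficients, the continuous functions `gₙ`
converge locally uniformly in the parameters and in `z`, and the limit is continuous. The family
`ρ(c; a)` qualifies: its coefficients are `a` and `d/(k+1)` times those of `∏ (X - cᵢ)`.
-/

open Polynomial Filter Topology Finset Real

theorem continuous_iterate_uncurry {Λ Y : Type*} [TopologicalSpace Λ] [TopologicalSpace Y]
    {Φ : Λ → Y → Y} (hΦ : Continuous fun q : Λ × Y => Φ q.1 q.2) (n : ℕ) :
    Continuous fun q : Λ × Y => (Φ q.1)^[n] q.2 := by
  induction n with
  | zero => exact continuous_snd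
  | succ n ih =>
    simp only [Function.iterate_succ_apply']
    exact hΦ.comp (continuous_fst.prodMk ih)

theorem Real.posLog_max_one {x : ℝ} (hx : 0 ≤ x) : log⁺ (max x 1) = log⁺ x := by
  rw [posLog_eq_log_max_one hx, posLog_eq_log (by simp [abs_of_nonneg, hx]), max_comm]

namespace Polynomial

variable {Λ R : Type*} [TopologicalSpace Λ] [TopologicalSpace R]

theorem continuous_coeff_prod {ι : Type*} [CommSemiring R] [IsTopologicalSemiring R]
    (s : Finset ι) (F : ι → Λ → R[X])
    (hF : ∀ i ∈ s, ∀ k, Continuous fun x => (F i x).coeff k) (k : ℕ) :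
    Continuous fun x => (∏ i ∈ s, F i x).coeff k := by
  classical
  induction s using Finset.induction_on generalizing k with
  | empty => simpa only [prod_empty, coeff_one] using continuous_const
  | insert a s ha ih =>
    simp only [prod_insert ha, coeff_mul]
    exact continuous_finsetSum _ fun ij _ =>
      (hF a (mem_insert_self a s) ij.1).mul (ih (fun i hi => hF i (mem_insert_of_mem hi)) ij.2)

theorem continuous_eval_of_continuous_coeff [Semiring R] [IsTopologicalSemiring R]
    (F : Λ → R[X]) {n : ℕ} (hdeg : ∀ x, (F x).natDegree < n)
    (hF : ∀ k, Continuous fun x => (F x).coeff k) :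
    Continuous fun q : Λ × R => (F q.1).eval q.2 := by
  simp only [eval_eq_sum_range' (hdeg _)]
  exact continuous_finsetSum _ fun k _ => ((hF k).comp continuous_fst).mul (continuous_snd.pow k)

noncomputable def escapeConst (f : ℂ[X]) : ℝ :=
  f.natDegree * log (2 * (1 + ∑ i ∈ range f.natDegree, ‖f.coeff i‖))

variable {f : ℂ[X]}

theorem Monic.norm_eval_sub_pow_le (hf : f.Monic) (z : ℂ) :
    max ‖z‖ 1 * ‖f.eval z - z ^ f.natDegree‖ ≤
      (∑ i ∈ range f.natDegree, ‖f.coeff i‖) * max ‖z‖ 1 ^ f.natDegree := by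
  set r := max ‖z‖ 1
  have hr : 1 ≤ r := le_max_right _ _
  have heval := congrArg (eval z) hf.as_sum
  simp only [eval_add, eval_pow, eval_X, eval_finsetSum, eval_mul, eval_C] at heval
  rw [heval, add_sub_cancel_left]
  calc r * ‖∑ i ∈ range f.natDegree, f.coeff i * z ^ i‖
      ≤ r * ∑ i ∈ range f.natDegree, ‖f.coeff i‖ * r ^ i := by
        gcongr
        refine (norm_sum_le _ _).trans (sum_le_sum fun i _ => ?_)
        rw [norm_mul, norm_pow]
        gcongr
        exact le_max_left _ _
    _ ≤ (∑ i ∈ range f.natDegree, ‖f.coeff i‖) * r ^ f.natDegree := by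
        rw [mul_sum, sum_mul]
        refine sum_le_sum fun i hi => ?_
        calc r * (‖f.coeff i‖ * r ^ i) = ‖f.coeff i‖ * r ^ (i + 1) := by ring
          _ ≤ ‖f.coeff i‖ * r ^ f.natDegree := by
            gcongr
            exact mem_range.mp hi

theorem Monic.posLog_norm_eval_le (hf : f.Monic) (hd : 1 ≤ f.natDegree) (z : ℂ) :
    log⁺ ‖f.eval z‖ ≤ escapeConst f + f.natDegree * log⁺ ‖z‖ := by
  set d := f.natDegree
  set s := ∑ i ∈ range d, ‖f.coeff i‖
  set r := max ‖z‖ 1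
  have hs : 0 ≤ s := sum_nonneg fun i _ => norm_nonneg _
  have hr : 1 ≤ r := le_max_right _ _
  have hnorm : ‖f.eval z‖ ≤ (1 + s) * r ^ d := by
    have hlead : ‖z ^ d‖ ≤ r ^ d := by rw [norm_pow]; gcongr; exact le_max_left _ _
    have hrem : ‖f.eval z - z ^ d‖ ≤ s * r ^ d :=
      (le_mul_of_one_le_left (norm_nonneg _) hr).trans (hf.norm_eval_sub_pow_le z)
    linarith [norm_le_insert' (f.eval z) (z ^ d)]
  calc log⁺ ‖f.eval z‖ ≤ log⁺ ((1 + s) * r ^ d) := posLog_le_posLog (norm_nonneg _) hnorm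
    _ ≤ log⁺ (1 + s) + d * log⁺ ‖z‖ := by
      rw [← posLog_max_one (norm_nonneg z), ← posLog_pow]; exact posLog_mul
    _ ≤ escapeConst f + d * log⁺ ‖z‖ := by
      rw [posLog_eq_log (by rw [abs_of_nonneg] <;> linarith)]
      gcongr
      calc log (1 + s) ≤ log (2 * (1 + s)) := log_le_log (by linarith) (by linarith)
        _ ≤ escapeConst f :=
          le_mul_of_one_le_left (log_nonneg (by linarith)) (by exact_mod_cast hd)

theorem Monic.natDegree_mul_posLog_le (hf : f.Monic) (hd : 1 ≤ f.natDegree) (z : ℂ) :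
    f.natDegree * log⁺ ‖z‖ ≤ escapeConst f + log⁺ ‖f.eval z‖ := by
  set d := f.natDegree
  set A := 1 + ∑ i ∈ range d, ‖f.coeff i‖
  have hA : 1 ≤ A := le_add_of_nonneg_right (sum_nonneg fun i _ => norm_nonneg _)
  have hconst : d * log (2 * A) = escapeConst f := rfl
  rcases le_or_gt (2 * A) ‖z‖ with hz | hz
  · -- for large `z` the leading term dominates
    have hlower : ‖z‖ ^ d ≤ 2 * ‖f.eval z‖ := by
      have hrz : max ‖z‖ 1 = ‖z‖ := max_eq_left (by linarith)
      have hrem : ‖z‖ * ‖f.eval z - z ^ d‖ ≤ ‖z‖ * (‖z‖ ^ d / 2) :=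
        calc ‖z‖ * ‖f.eval z - z ^ d‖ ≤ (A - 1) * ‖z‖ ^ d := by
              simpa [hrz, A] using hf.norm_eval_sub_pow_le z
          _ ≤ ‖z‖ * (‖z‖ ^ d / 2) := by nlinarith [pow_nonneg (norm_nonneg z) d]
      have hsmall := le_of_mul_le_mul_left hrem (by linarith)
      have htri := norm_sub_norm_le (z ^ d) (f.eval z)
      rw [norm_sub_rev, norm_pow] at htri
      linarith
    calc d * log⁺ ‖z‖ = log⁺ (‖z‖ ^ d) := (posLog_pow _ _).symm
      _ ≤ log⁺ (2 * ‖f.eval z‖) := posLog_le_posLog (by positivity) hlower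
      _ ≤ log 2 + log⁺ ‖f.eval z‖ := by
        rw [← posLog_eq_log (by norm_num)]; exact posLog_mul
      _ ≤ escapeConst f + log⁺ ‖f.eval z‖ := by
        rw [← hconst]
        gcongr
        calc log 2 ≤ log (2 * A) := log_le_log two_pos (by linarith)
          _ ≤ d * log (2 * A) :=
            le_mul_of_one_le_left (log_nonneg (by linarith)) (by exact_mod_cast hd)
  · calc d * log⁺ ‖z‖ ≤ d * log⁺ (2 * A) := by gcongr
      _ ≤ escapeConst f + log⁺ ‖f.eval z‖ := by
        rw [posLog_eq_log (by rw [abs_of_nonneg] <;> linarith), hconst]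
        linarith [posLog_nonneg (x := ‖f.eval z‖)]

theorem Monic.abs_posLog_norm_eval_sub_le (hf : f.Monic) (hd : 1 ≤ f.natDegree) (z : ℂ) :
    |log⁺ ‖f.eval z‖ - f.natDegree * log⁺ ‖z‖| ≤ escapeConst f :=
  abs_sub_le_iff.mpr ⟨sub_le_iff_le_add.mpr (hf.posLog_norm_eval_le hd z),
    sub_le_iff_le_add.mpr (hf.natDegree_mul_posLog_le hd z)⟩

noncomputable def escapeApprox (f : ℂ[X]) (n : ℕ) (z : ℂ) : ℝ :=
  (f.natDegree : ℝ)⁻¹ ^ n * log⁺ ‖(fun w => f.eval w)^[n] z‖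

theorem escapeRate_eq_limUnder (f : ℂ[X]) (z : ℂ) :
    escapeRate f z = limUnder atTop (escapeApprox f · z) := by
  simp only [escapeRate, escapeApprox, posLog_eq_log_max_one (norm_nonneg _), max_comm]

theorem Monic.dist_escapeApprox_succ_le (hf : f.Monic) (hd : 1 ≤ f.natDegree) (z : ℂ) (n : ℕ) :
    dist (escapeApprox f n z) (escapeApprox f (n + 1) z) ≤
      escapeConst f * (f.natDegree : ℝ)⁻¹ * (f.natDegree : ℝ)⁻¹ ^ n := by
  have hd0 : (f.natDegree : ℝ) ≠ 0 := by positivity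
  set w := (fun w => f.eval w)^[n] z
  have hsucc : escapeApprox f (n + 1) z - escapeApprox f n z =
      (f.natDegree : ℝ)⁻¹ * (f.natDegree : ℝ)⁻¹ ^ n *
        (log⁺ ‖f.eval w‖ - f.natDegree * log⁺ ‖w‖) := by
    simp only [escapeApprox, Function.iterate_succ_apply', pow_succ']
    field_simp
    rfl
  calc dist (escapeApprox f n z) (escapeApprox f (n + 1) z)
      = (f.natDegree : ℝ)⁻¹ * (f.natDegree : ℝ)⁻¹ ^ n *
          |log⁺ ‖f.eval w‖ - f.natDegree * log⁺ ‖w‖| := by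
        rw [dist_comm, dist_eq_norm, Real.norm_eq_abs, hsucc, abs_mul,
          abs_of_nonneg (by positivity)]
    _ ≤ (f.natDegree : ℝ)⁻¹ * (f.natDegree : ℝ)⁻¹ ^ n * escapeConst f := by
        gcongr
        exact hf.abs_posLog_norm_eval_sub_le hd w
    _ = escapeConst f * (f.natDegree : ℝ)⁻¹ * (f.natDegree : ℝ)⁻¹ ^ n := by ring

theorem Monic.tendsto_escapeApprox (hf : f.Monic) (hd : 2 ≤ f.natDegree) (z : ℂ) :
    Tendsto (escapeApprox f · z) atTop (𝓝 (escapeRate f z)) := by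
  rw [escapeRate_eq_limUnder]
  exact (cauchySeq_of_le_geometric _ _ (inv_lt_one_of_one_lt₀ (by exact_mod_cast hd))
    (hf.dist_escapeApprox_succ_le (by omega) z)).tendsto_limUnder

theorem Monic.dist_escapeApprox_escapeRate_le (hf : f.Monic) (hd : 2 ≤ f.natDegree) (z : ℂ)
    (n : ℕ) : dist (escapeApprox f n z) (escapeRate f z) ≤
      escapeConst f * (f.natDegree : ℝ)⁻¹ * (f.natDegree : ℝ)⁻¹ ^ n /
        (1 - (f.natDegree : ℝ)⁻¹) :=
  dist_le_of_le_geometric_of_tendsto _ _ (inv_lt_one_of_one_lt₀ (by exact_mod_cast hd))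
    (hf.dist_escapeApprox_succ_le (by omega) z) (hf.tendsto_escapeApprox hd z) n

end Polynomial

section Family

variable {Λ : Type*} [TopologicalSpace Λ] {F : Λ → ℂ[X]} {d : ℕ}

theorem tendstoLocallyUniformly_escapeApprox (hd : 2 ≤ d) (hmonic : ∀ x, (F x).Monic)
    (hdeg : ∀ x, (F x).natDegree = d) (hconst : Continuous fun x => escapeConst (F x)) :
    TendstoLocallyUniformly (fun n (q : Λ × ℂ) => escapeApprox (F q.1) n q.2)
      (fun q => escapeRate (F q.1) q.2) atTop := by
  have hr : (d : ℝ)⁻¹ < 1 := inv_lt_one_of_one_lt₀ (by exact_mod_cast hd)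
  rw [Metric.tendstoLocallyUniformly_iff]
  intro ε hε q
  set M := escapeConst (F q.1) + 1
  have hbound :
      Tendsto (fun n => M * (d : ℝ)⁻¹ * (d : ℝ)⁻¹ ^ n / (1 - (d : ℝ)⁻¹)) atTop (𝓝 0) := by
    simpa using ((tendsto_pow_atTop_nhds_zero_of_lt_one (by positivity) hr).const_mul
      (M * (d : ℝ)⁻¹)).div_const (1 - (d : ℝ)⁻¹)
  have hq : escapeConst (F q.1) < M := lt_add_one _
  refine ⟨{y | escapeConst (F y.1) < M},
    (isOpen_lt (hconst.comp continuous_fst) continuous_const).mem_nhds hq, ?_⟩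
  filter_upwards [hbound.eventually_lt_const hε] with n hn y hy
  have hdist := (hmonic y.1).dist_escapeApprox_escapeRate_le (hdeg y.1 ▸ hd) y.2 n
  rw [hdeg] at hdist
  rw [dist_comm]
  refine hdist.trans_lt (lt_of_le_of_lt ?_ hn)
  have hgap : 0 < 1 - (d : ℝ)⁻¹ := sub_pos.mpr hr
  gcongr

theorem continuous_escapeRate_of_continuous_coeff (hd : 2 ≤ d) (hmonic : ∀ x, (F x).Monic)
    (hdeg : ∀ x, (F x).natDegree = d) (hcoeff : ∀ k, Continuous fun x => (F x).coeff k) :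
    Continuous fun q : Λ × ℂ => escapeRate (F q.1) q.2 := by
  have hconst : Continuous fun x => escapeConst (F x) := by
    simp only [escapeConst, hdeg]
    exact continuous_const.mul ((continuous_const.mul (continuous_const.add
      (continuous_finsetSum _ fun i _ => (hcoeff i).norm))).log fun x => by dsimp; positivity)
  have heval : Continuous fun q : Λ × ℂ => (F q.1).eval q.2 :=
    continuous_eval_of_continuous_coeff F (fun x => (hdeg x).trans_lt d.lt_succ_self) hcoeff
  refine (tendstoLocallyUniformly_escapeApprox hd hmonic hdeg hconst).continuous
    (Frequently.of_forall fun n => ?_)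
  simp only [escapeApprox, hdeg]
  exact continuous_const.mul (continuous_posLog.comp
    (continuous_iterate_uncurry (Φ := fun x w => (F x).eval w) heval n).norm)

end Family

theorem Polynomial.coeff_sum_C_div_mul_X_pow_succ {K : Type*} [Field K] (p : K[X]) (k : ℕ) :
    (p.sum fun n b => C (b / (n + 1)) * X ^ (n + 1)).coeff (k + 1) = p.coeff k / (k + 1) := by
  simp +contextual [Polynomial.sum_def, finsetSum_coeff]
section Rho

variable (d : ℕ) (c : Fin (d - 1) → ℂ) (a : ℂ)

theorem coeff_rho_zero : (rho d c a).coeff 0 = a := by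
  simp [rho, Polynomial.sum_def]

theorem coeff_rho_succ (k : ℕ) :
    (rho d c a).coeff (k + 1) = d * (∏ i, (X - C (c i))).coeff k / (k + 1) := by
  rw [rho, coeff_add, coeff_sum_C_div_mul_X_pow_succ, coeff_C_mul, coeff_C_succ, add_zero]

variable {d}

theorem coeff_rho_self (hd : 1 ≤ d) : (rho d c a).coeff d = 1 := by
  have htop := (monic_prod_X_sub_C c univ).coeff_natDegree
  rw [natDegree_finsetProd_X_sub_C_eq_card, card_univ, Fintype.card_fin] at htop
  have hd0 : (d : ℂ) ≠ 0 := by exact_mod_cast (by omega : d ≠ 0)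
  have h := coeff_rho_succ d c a (d - 1)
  rw [Nat.sub_add_cancel hd, htop, Nat.cast_pred hd] at h
  rw [h, sub_add_cancel, mul_one, div_self hd0]

theorem coeff_rho_eq_zero_of_lt (hd : 1 ≤ d) {j : ℕ} (hj : d < j) :
    (rho d c a).coeff j = 0 := by
  obtain ⟨i, rfl⟩ := Nat.exists_eq_add_of_le' (Nat.one_le_of_lt hj)
  have hlt : (∏ i, (X - C (c i))).natDegree < i := by
    rw [natDegree_finsetProd_X_sub_C_eq_card, card_univ, Fintype.card_fin]
    omega
  rw [coeff_rho_succ, coeff_eq_zero_of_natDegree_lt hlt, mul_zero, zero_div]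

theorem natDegree_rho (hd : 1 ≤ d) : (rho d c a).natDegree = d :=
  natDegree_eq_of_le_of_coeff_ne_zero
    (natDegree_le_iff_coeff_eq_zero.mpr fun _ hj =>
      coeff_rho_eq_zero_of_lt c a hd (by exact_mod_cast hj))
    (by rw [coeff_rho_self c a hd]; exact one_ne_zero)

theorem monic_rho (hd : 1 ≤ d) : (rho d c a).Monic := by
  rw [Monic, leadingCoeff, natDegree_rho c a hd, coeff_rho_self c a hd]

variable (d)

theorem continuous_coeff_rho (k : ℕ) :
    Continuous fun p : (Fin (d - 1) → ℂ) × ℂ => (rho d p.1 p.2).coeff k := by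
  cases k with
  | zero => simpa only [coeff_rho_zero] using continuous_snd
  | succ k =>
    simp only [coeff_rho_succ]
    refine (continuous_const.mul (continuous_coeff_prod _ _ (fun i _ j => ?_) k)).div_const _
    simp only [coeff_sub, coeff_X, coeff_C]
    split_ifs <;> fun_prop

end Rho

/-- The map `(c; a; z) ↦ G_{ρ(c;a)}(z)` is continuous on `H × ℂ × ℂ`,
where `H = {c ∈ ℂ^{d−1} : ∑ cᵢ = 0}`; in particular the marked critical heights map
`𝒢^×(c; a) = (G_f(c₁), …, G_f(c_{d−1}))`, `f = ρ(c;a)`, is continuous on `H × ℂ`. -/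
theorem escapeRate_continuousOn_marked (d : ℕ) (hd : 2 ≤ d) :
    ContinuousOn
      (fun p : (Fin (d - 1) → ℂ) × ℂ × ℂ => escapeRate (rho d p.1 p.2.1) p.2.2)
      {p : (Fin (d - 1) → ℂ) × ℂ × ℂ | ∑ i, p.1 i = 0} ∧
    ContinuousOn
      (fun p : (Fin (d - 1) → ℂ) × ℂ =>
        (fun i => escapeRate (rho d p.1 p.2) (p.1 i) : Fin (d - 1) → ℝ))
      {p : (Fin (d - 1) → ℂ) × ℂ | ∑ i, p.1 i = 0} := by
  have hfamily := continuous_escapeRate_of_continuous_coeff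
    (F := fun p : (Fin (d - 1) → ℂ) × ℂ => rho d p.1 p.2) hd
    (fun p => monic_rho p.1 p.2 (by omega)) (fun p => natDegree_rho p.1 p.2 (by omega))
    (continuous_coeff_rho d)
  have hG :
      Continuous fun p : (Fin (d - 1) → ℂ) × ℂ × ℂ => escapeRate (rho d p.1 p.2.1) p.2.2 :=
    hfamily.comp (f := fun p : (Fin (d - 1) → ℂ) × ℂ × ℂ => ((p.1, p.2.1), p.2.2))
      (by fun_prop)
  refine ⟨hG.continuousOn, (continuous_pi fun i => ?_).continuousOn⟩
  exact hG.comp (f := fun p : (Fin (d - 1) → ℂ) × ℂ => (p.1, p.2, p.1 i)) (by fun_prop)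
end

section
/- Let d ≥ 2, 1 ≤ N ≤ d−1, and let P_d = {h ∈ ℝ^{d−1} : 1 = h₁ ≥ h₂ ≥ ⋯ ≥ h_{d−1} > 0}. Every connected component of the stratum P_d^N (with the subspace topology from ℝ^{d−1}) is homeomorphic to the open standard (N−1)-simplex σ_N = {x ∈ ℝ^N : x_i > 0 for all i and x₁ + ⋯ + x_N = 1}. -/
/-- Positive real numbers `x` and `y` are *dependent in degree `d`* if `x = dⁿ · y`
for some `n ∈ ℤ`. -/
def DegDep (d : ℕ) (x y : ℝ) : Prop := ∃ n : ℤ, x = (d : ℝ) ^ n * y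

/-- The projectivized shift-locus height space
`P_d = {h ∈ ℝ^{d−1} : 1 = h₁ ≥ h₂ ≥ ⋯ ≥ h_{d−1} > 0}`. -/
def Pd (d : ℕ) (hd : 2 ≤ d) : Set (Fin (d - 1) → ℝ) :=
  {h | h ⟨0, by omega⟩ = 1 ∧ (∀ i j : Fin (d - 1), i ≤ j → h j ≤ h i) ∧ ∀ i, 0 < h i}

/-- The stratum `P_d^N ⊆ P_d` of height vectors for which the equivalence relation
`i ∼ j ↔ hᵢ` and `hⱼ` are dependent in degree `d` has exactly `N` equivalence classes. -/
def stratum (d : ℕ) (hd : 2 ≤ d) (N : ℕ) : Set (Fin (d - 1) → ℝ) :=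
  {h ∈ Pd d hd |
    {s : Set (Fin (d - 1)) | ∃ i : Fin (d - 1), s = {j | DegDep d (h i) (h j)}}.ncard = N}

/-!
In base-`d` logarithmic coordinates `aᵢ = log_d hᵢ`, two heights are dependent exactly when their
fractional parts agree, so `h ∈ P_d^N` means that the `fract aᵢ` take `N` values, one of which is
`fract a₁ = 0`. Call the integer parts `⌊aᵢ⌋` together with the order of the fractional parts the
*type* of `h`. The type is locally constant on the stratum: near `h`, indices from different
classes stay at non-integral distance, so nearby points can only refine the partition into
classes; as the number of classes is fixed, the partition, and with it the integer parts and the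
order of the classes, does not change. Conversely, a point of a given type is determined by the
fractional values `0 = t₀ < t₁ < ⋯ < t_{N-1} < 1` of its classes, which range freely over an open
order simplex, homeomorphic to `σ_N` through the gaps `t_{k+1} - t_k` (with `t_N = 1`). Each type
fibre is therefore connected and clopen in the stratum, i.e. a connected component.
-/
open Set Function

namespace ShiftLocus

section Fibres

variable {ι α β : Type*}

lemma ncard_setOf_fibres (f : ι → α) :
    {s : Set ι | ∃ i, s = {j | f i = f j}}.ncard = (range f).ncard := by
  have hfib : {s : Set ι | ∃ i, s = {j | f i = f j}} = (fun a => f ⁻¹' {a}) '' range f := by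
    ext s
    simp [preimage, eq_comm]
  rw [hfib, InjOn.ncard_image]
  rintro _ ⟨i, rfl⟩ _ ⟨j, rfl⟩ hij
  exact (congrArg (i ∈ ·) hij).mp rfl

lemma ncard_range_eq_of_eq_iff_eq {f : ι → α} {g : ι → β} (h : ∀ i j, f i = f j ↔ g i = g j) :
    (range f).ncard = (range g).ncard := by
  simp only [← ncard_setOf_fibres, h]

lemma eq_iff_eq_of_lt_iff_lt [LinearOrder α] [LinearOrder β] {f : ι → α} {g : ι → β}
    (h : ∀ i j, f i < f j ↔ g i < g j) (i j : ι) : f i = f j ↔ g i = g j := by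
  simp only [le_antisymm_iff, ← not_lt, h]

lemma eq_of_eq_of_factorsThrough [Finite ι] {f : ι → α} {g : ι → β} (hfg : f.FactorsThrough g)
    (hcard : (range g).ncard ≤ (range f).ncard) {i j : ι} (h : f i = f j) : g i = g j := by
  set F := extend g f fun _ => f i
  have hF : ∀ k, F (g k) = f k := hfg.extend_apply _
  have himage : F '' range g = range f := by
    rw [← range_comp]; exact congrArg range (funext hF)
  have hinj : InjOn F (range g) := by
    refine injOn_of_ncard_image_eq (le_antisymm (ncard_image_le (toFinite _)) ?_)
    rwa [himage]
  exact hinj (mem_range_self i) (mem_range_self j) (by rw [hF, hF, h])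

lemma exists_rank [Finite ι] [LinearOrder α] {f : ι → α} {N : ℕ} (hN : (range f).ncard = N) :
    ∃ r : ι → Fin N, Surjective r ∧ ∀ i j, r i < r j ↔ f i < f j := by
  classical
  have := Fintype.ofFinite ι
  let e : Fin N ≃o (range f).toFinset :=
    (range f).toFinset.orderIsoOfFin (by rw [← hN, ncard_eq_toFinset_card'])
  refine ⟨fun i => e.symm ⟨f i, by simp⟩, fun k => ?_, fun i j => by simp⟩
  obtain ⟨i, hi⟩ : (e k : α) ∈ range f := by simpa using (e k).2
  exact ⟨i, by simp [hi]⟩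

end Fibres

section FloorFract

lemma lt_iff_floor_lt_or_floor_eq_and_fract_lt {a b : ℝ} :
    a < b ↔ ⌊a⌋ < ⌊b⌋ ∨ ⌊a⌋ = ⌊b⌋ ∧ Int.fract a < Int.fract b := by
  constructor
  · intro h
    rcases (Int.floor_mono h.le).lt_or_eq with hlt | heq
    · exact Or.inl hlt
    · exact Or.inr ⟨heq, by rw [Int.fract, Int.fract, heq]; linarith⟩
  · rintro (hlt | ⟨heq, hlt⟩)
    · have : (⌊a⌋ : ℝ) + 1 ≤ ⌊b⌋ := by exact_mod_cast hlt
      linarith [Int.lt_floor_add_one a, Int.floor_le b]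
    · rw [← Int.floor_add_fract a, ← Int.floor_add_fract b, heq]
      linarith

variable {ι : Type*}

noncomputable def floorFractType (a : ι → ℝ) : (ι → ℤ) × (ι → ι → Prop) :=
  (fun i => ⌊a i⌋, fun i j => Int.fract (a i) < Int.fract (a j))

lemma floorFractType_eq_iff {a a' : ι → ℝ} :
    floorFractType a' = floorFractType a ↔ (∀ i, ⌊a' i⌋ = ⌊a i⌋) ∧
      ∀ i j, Int.fract (a' i) < Int.fract (a' j) ↔ Int.fract (a i) < Int.fract (a j) := by
  simp [floorFractType, Prod.ext_iff, funext_iff, eq_iff_iff]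

lemma lt_iff_lt_of_floorFractType_eq {a a' : ι → ℝ} (h : floorFractType a' = floorFractType a)
    (i j : ι) : a' i < a' j ↔ a i < a j := by
  obtain ⟨hfloor, hfract⟩ := floorFractType_eq_iff.mp h
  rw [lt_iff_floor_lt_or_floor_eq_and_fract_lt (a := a' i),
    lt_iff_floor_lt_or_floor_eq_and_fract_lt (a := a i), hfloor, hfloor, hfract]

/-- Applied to shifted log coordinates `v = a' - ⌊a⌋` with `θ = fract ∘ a`: the bound
`v i < v j + 1` keeps indices of distinct classes of `a` at a non-integral distance. -/
def orderNbhd (θ : ι → ℝ) : Set (ι → ℝ) :=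
  {v | (∀ i j, θ i < θ j → v i < v j) ∧ ∀ i j, v i < v j + 1}

lemma isOpen_orderNbhd [Finite ι] (θ : ι → ℝ) : IsOpen (orderNbhd θ) := by
  simp only [orderNbhd, ofPred_and, ofPred_forall]
  exact .inter
    (isOpen_iInter_of_finite fun i => isOpen_iInter_of_finite fun j =>
      isOpen_iInter_of_finite fun _ => isOpen_lt (continuous_apply i) (continuous_apply j))
    (isOpen_iInter_of_finite fun i => isOpen_iInter_of_finite fun j =>
      isOpen_lt (continuous_apply i) ((continuous_apply j).add continuous_const))

lemma fract_mem_orderNbhd (a : ι → ℝ) :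
    (fun i => Int.fract (a i)) ∈ orderNbhd fun i => Int.fract (a i) :=
  ⟨fun _ _ h => h, fun i j => by linarith [Int.fract_lt_one (a i), Int.fract_nonneg (a j)]⟩

section Perturbation

variable {a a' : ι → ℝ}

lemma fract_eq_of_fract_eq_of_mem_orderNbhd
    (hv : (fun i => a' i - ⌊a i⌋) ∈ orderNbhd fun i => Int.fract (a i)) {i j : ι}
    (h : Int.fract (a' i) = Int.fract (a' j)) :
    Int.fract (a i) = Int.fract (a j) := by
  set v := fun i => a' i - (⌊a i⌋ : ℝ)
  -- `v i` and `v j` differ by an integer, which the neighbourhood keeps out of `(0, 1)`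
  have key : ∀ i j, Int.fract (a' i) = Int.fract (a' j) → ¬ Int.fract (a i) < Int.fract (a j) := by
    intro i j h hlt
    obtain ⟨z, hz⟩ : ∃ z : ℤ, v i - v j = z := by
      rw [← Int.fract_eq_fract, Int.fract_sub_intCast, Int.fract_sub_intCast, h]
    have h1 : v i < v j := hv.1 i j hlt
    have h2 : v j < v i + 1 := hv.2 j i
    have hz0 : (0 : ℤ) < -z := by exact_mod_cast (show (0 : ℝ) < -z by linarith)
    have hz1 : -z < (1 : ℤ) := by exact_mod_cast (show -(z : ℝ) < 1 by linarith)
    omega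
  exact le_antisymm (not_lt.mp (key j i h.symm)) (not_lt.mp (key i j h))

lemma fract_eq_iff_of_mem_orderNbhd [Finite ι]
    (hv : (fun i => a' i - ⌊a i⌋) ∈ orderNbhd fun i => Int.fract (a i))
    (hcard : (range fun i => Int.fract (a' i)).ncard ≤ (range fun i => Int.fract (a i)).ncard)
    (i j : ι) : Int.fract (a' i) = Int.fract (a' j) ↔ Int.fract (a i) = Int.fract (a j) :=
  ⟨fract_eq_of_fract_eq_of_mem_orderNbhd hv,
    eq_of_eq_of_factorsThrough (fun _ _ => fract_eq_of_fract_eq_of_mem_orderNbhd hv) hcard⟩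

lemma sub_floor_mem_Ico_of_mem_orderNbhd [Finite ι] {i₀ : ι} (ha : a i₀ = 0) (ha' : a' i₀ = 0)
    (hv : (fun i => a' i - ⌊a i⌋) ∈ orderNbhd fun i => Int.fract (a i))
    (hcard : (range fun i => Int.fract (a' i)).ncard ≤ (range fun i => Int.fract (a i)).ncard)
    (i : ι) : a' i - ⌊a i⌋ ∈ Ico 0 1 := by
  set v := fun i => a' i - (⌊a i⌋ : ℝ)
  have hv₀ : v i₀ = 0 := by simp [v, ha, ha']
  have hθ₀ : Int.fract (a i₀) = 0 := by simp [ha]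
  have hupper : v i < v i₀ + 1 := hv.2 i i₀
  show v i ∈ Ico 0 1
  rcases (Int.fract_nonneg (a i)).lt_or_eq with hpos | hzero
  · have : v i₀ < v i := hv.1 i₀ i (by simpa only [hθ₀] using hpos)
    constructor <;> linarith
  -- `i` lies in the class of `i₀`, so `v i` is an integer strictly between `-1` and `1`
  obtain ⟨z, hz⟩ : ∃ z : ℤ, v i - v i₀ = z := by
    rw [← Int.fract_eq_fract, Int.fract_sub_intCast, Int.fract_sub_intCast]
    exact (fract_eq_iff_of_mem_orderNbhd hv hcard i i₀).mpr (hzero.symm.trans hθ₀.symm)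
  have hlower : v i₀ < v i + 1 := hv.2 i₀ i
  have hz1 : z < 1 := by exact_mod_cast (show (z : ℝ) < 1 by linarith)
  have hz2 : -1 < z := by exact_mod_cast (show (-1 : ℝ) < z by linarith)
  have hz0 : (z : ℝ) = 0 := by exact_mod_cast (show z = 0 by omega)
  constructor <;> linarith

lemma floorFractType_eq_of_mem_orderNbhd [Finite ι] {i₀ : ι} (ha : a i₀ = 0) (ha' : a' i₀ = 0)
    (hv : (fun i => a' i - ⌊a i⌋) ∈ orderNbhd fun i => Int.fract (a i))
    (hcard : (range fun i => Int.fract (a' i)).ncard ≤ (range fun i => Int.fract (a i)).ncard) :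
    floorFractType a' = floorFractType a := by
  have hIco := sub_floor_mem_Ico_of_mem_orderNbhd ha ha' hv hcard
  have hfloor : ∀ i, ⌊a' i⌋ = ⌊a i⌋ := fun i =>
    Int.floor_eq_iff.mpr ⟨by linarith [(hIco i).1], by linarith [(hIco i).2]⟩
  have hfract : ∀ i, Int.fract (a' i) = a' i - ⌊a i⌋ := fun i => by rw [Int.fract, hfloor]
  refine floorFractType_eq_iff.mpr ⟨hfloor, fun i j => ⟨fun h => ?_, fun h => ?_⟩⟩
  · by_contra hnot
    rcases (not_lt.mp hnot).lt_or_eq with hlt | heq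
    · exact (hv.1 j i hlt).not_gt (by rwa [hfract, hfract] at h)
    · exact h.ne' ((fract_eq_iff_of_mem_orderNbhd hv hcard j i).mpr heq)
  · rw [hfract, hfract]
    exact hv.1 i j h

end Perturbation

end FloorFract

section Stratum

open Real

variable {d N : ℕ} {hd : 2 ≤ d}

lemma degDep_iff_fract_logb_eq {x y : ℝ} (hb : 1 < (d : ℝ)) (hx : 0 < x) (hy : 0 < y) :
    DegDep d x y ↔ Int.fract (logb d x) = Int.fract (logb d y) := by
  have hb₀ : (0 : ℝ) < d := by linarith
  rw [Int.fract_eq_fract]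
  refine exists_congr fun n => ⟨fun hxy => ?_, fun hxy => ?_⟩
  · rw [hxy, ← rpow_intCast, logb_mul (by positivity) hy.ne', logb_rpow hb₀ hb.ne']
    ring
  · rw [← rpow_logb hb₀ hb.ne' hx, ← rpow_logb hb₀ hb.ne' hy, ← rpow_intCast, ← rpow_add hb₀,
      ← hxy, sub_add_cancel]

lemma mem_stratum_iff {h : Fin (d - 1) → ℝ} :
    h ∈ stratum d hd N ↔ h ∈ Pd d hd ∧ (range fun i => Int.fract (logb d (h i))).ncard = N := by
  refine and_congr_right fun hP => ?_
  have hdep : ∀ i j, DegDep d (h i) (h j) ↔ Int.fract (logb d (h i)) = Int.fract (logb d (h j)) :=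
    fun i j => degDep_iff_fract_logb_eq (Nat.one_lt_cast.mpr hd) (hP.2.2 i) (hP.2.2 j)
  simp only [hdep, ncard_setOf_fibres]

lemma mem_stratum_of_floorFractType_eq {h h' : Fin (d - 1) → ℝ} (hh : h ∈ stratum d hd N)
    (hpos : ∀ i, 0 < h' i) (hT : floorFractType (logb d ∘ h') = floorFractType (logb d ∘ h))
    (h₀ : Int.fract (logb d (h' ⟨0, by omega⟩)) = 0) : h' ∈ stratum d hd N := by
  obtain ⟨⟨h₁, hanti, hposh⟩, hcard⟩ := mem_stratum_iff.mp hh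
  obtain ⟨hfloor, hfract⟩ := floorFractType_eq_iff.mp hT
  have hb : (1 : ℝ) < d := Nat.one_lt_cast.mpr hd
  refine mem_stratum_iff.mpr ⟨⟨?_, fun i j hij => ?_, hpos⟩, ?_⟩
  · have hlog : logb d (h' ⟨0, by omega⟩) = 0 := by
      have := hfloor ⟨0, by omega⟩
      simp only [comp_apply, h₁, logb_one, Int.floor_zero] at this
      rw [← Int.floor_add_fract (logb d _), this, h₀, Int.cast_zero, add_zero]
    rw [← rpow_logb (by linarith) hb.ne' (hpos _), hlog, rpow_zero]
  · have hle := hanti i j hij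
    rw [← logb_le_logb hb (hposh j) (hposh i), ← not_lt] at hle
    rw [← logb_le_logb hb (hpos j) (hpos i), ← not_lt]
    exact fun hlt => hle ((lt_iff_lt_of_floorFractType_eq hT i j).mp hlt)
  · rw [← hcard]
    exact ncard_range_eq_of_eq_iff_eq (eq_iff_eq_of_lt_iff_lt hfract)

lemma isLocallyConstant_floorFractType_logb :
    IsLocallyConstant fun h : stratum d hd N => floorFractType (logb d ∘ h.1) := by
  refine (IsLocallyConstant.iff_eventually_eq _).mpr fun ⟨h, hh⟩ => ?_
  let φ : stratum d hd N → Fin (d - 1) → ℝ := fun h' i => logb d (h'.1 i) - ⌊logb d (h i)⌋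
  have hφ : Continuous φ := continuous_pi fun i =>
    (((continuous_apply i).comp continuous_subtype_val).logb
      fun h' => ((mem_stratum_iff.mp h'.2).1.2.2 i).ne').sub continuous_const
  have hφh : φ ⟨h, hh⟩ = fun i => Int.fract (logb d (h i)) := funext fun i => Int.self_sub_floor _
  have hnhds : φ ⁻¹' orderNbhd (fun i => Int.fract (logb d (h i))) ∈ nhds ⟨h, hh⟩ :=
    hφ.continuousAt.preimage_mem_nhds
      ((isOpen_orderNbhd _).mem_nhds (hφh ▸ fract_mem_orderNbhd (logb d ∘ h)))
  filter_upwards [hnhds] with h' hh'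
  have hcard := (mem_stratum_iff.mp h'.2).2.trans (mem_stratum_iff.mp hh).2.symm
  exact floorFractType_eq_of_mem_orderNbhd (i₀ := ⟨0, by omega⟩)
    (by rw [comp_apply, (mem_stratum_iff.mp hh).1.1, logb_one])
    (by rw [comp_apply, (mem_stratum_iff.mp h'.2).1.1, logb_one]) hh' hcard.le

def typeFibre (d : ℕ) (hd : 2 ≤ d) (N : ℕ) (h : Fin (d - 1) → ℝ) : Set (Fin (d - 1) → ℝ) :=
  {h' ∈ stratum d hd N | floorFractType (logb d ∘ h') = floorFractType (logb d ∘ h)}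

lemma connectedComponentIn_stratum_eq_typeFibre {h : Fin (d - 1) → ℝ} (hh : h ∈ stratum d hd N)
    (hconn : IsPreconnected (typeFibre d hd N h)) :
    connectedComponentIn (stratum d hd N) h = typeFibre d hd N h := by
  refine subset_antisymm ?_ (hconn.subset_connectedComponentIn ⟨hh, rfl⟩ (sep_subset _ _))
  rw [connectedComponentIn_eq_image hh]
  rintro _ ⟨h', hh', rfl⟩
  exact ⟨h'.2, isLocallyConstant_floorFractType_logb.apply_eq_of_isPreconnected
    isPreconnected_connectedComponent hh' mem_connectedComponent⟩

end Stratum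

section Simplex

def openSimplex (N : ℕ) : Set (Fin N → ℝ) := {x | (∀ i, 0 < x i) ∧ ∑ i, x i = 1}

def orderSimplex (N : ℕ) : Set (Fin (N + 1) → ℝ) :=
  {P | StrictMono P ∧ P 0 = 0 ∧ P (Fin.last N) = 1}

variable {N : ℕ}

lemma convex_openSimplex : Convex ℝ (openSimplex N) := by
  refine convex_iff_forall_pos.mpr fun x hx y hy a b ha hb hab => ⟨fun i => ?_, ?_⟩
  · have := hx.1 i
    have := hy.1 i
    simp only [Pi.add_apply, Pi.smul_apply, smul_eq_mul]
    positivity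
  · simp only [Pi.add_apply, Pi.smul_apply, smul_eq_mul, Finset.sum_add_distrib, ← Finset.mul_sum,
      hx.2, hy.2, mul_one, hab]

lemma partialSum_last (x : Fin N → ℝ) : Fin.partialSum x (Fin.last N) = ∑ i, x i := by
  rw [Fin.partialSum, Fin.val_last, List.take_of_length_le (by simp), List.sum_ofFn]

lemma continuous_partialSum (k : Fin (N + 1)) :
    Continuous fun x : Fin N → ℝ => Fin.partialSum x k := by
  induction k using Fin.induction with
  | zero => simpa using continuous_const
  | succ k ih =>
    simp only [Fin.partialSum_succ]
    exact ih.add (continuous_apply k)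

lemma partialSum_succ_sub_castSucc {P : Fin (N + 1) → ℝ} (h0 : P 0 = 0) :
    Fin.partialSum (fun i => P i.succ - P i.castSucc) = P := by
  simpa [sub_eq_neg_add, h0] using Fin.partialSum_left_neg P

lemma mem_Ico_of_mem_orderSimplex {P : Fin (N + 1) → ℝ} (hP : P ∈ orderSimplex N) (k : Fin N) :
    P k.castSucc ∈ Ico 0 1 := by
  obtain ⟨hmono, h0, hlast⟩ := hP
  exact ⟨h0 ▸ hmono.monotone (Fin.zero_le _), hlast ▸ hmono (Fin.castSucc_lt_last k)⟩

def openSimplexHomeomorphOrderSimplex (N : ℕ) : openSimplex N ≃ₜ orderSimplex N where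
  toFun x := ⟨Fin.partialSum x.1,
    Fin.strictMono_iff_lt_succ.mpr fun i => by simpa [Fin.partialSum_succ] using x.2.1 i,
    Fin.partialSum_zero _, (partialSum_last _).trans x.2.2⟩
  invFun P := ⟨fun i => P.1 i.succ - P.1 i.castSucc,
    fun i => sub_pos.mpr (P.2.1 Fin.castSucc_lt_succ),
    by rw [← partialSum_last, partialSum_succ_sub_castSucc P.2.2.1, P.2.2.2]⟩
  left_inv x := Subtype.ext <| funext fun i => by
    simpa [sub_eq_neg_add] using Fin.partialSum_right_neg x.1 i
  right_inv P := Subtype.ext (partialSum_succ_sub_castSucc P.2.2.1)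
  continuous_toFun := (continuous_pi fun k => (continuous_partialSum k).comp
    continuous_subtype_val).subtype_mk _
  continuous_invFun := (continuous_pi fun i =>
    ((continuous_apply i.succ).comp continuous_subtype_val).sub
      ((continuous_apply i.castSucc).comp continuous_subtype_val)).subtype_mk _

end Simplex

section Parametrization

open Real

variable {d n N : ℕ} {hd : 2 ≤ d} {h h' : Fin (d - 1) → ℝ} {r : Fin (d - 1) → Fin (n + 1)}
  {rep : Fin (n + 1) → Fin (d - 1)}

noncomputable def heightOfOrderSimplex (d : ℕ) (h : Fin (d - 1) → ℝ)
    (r : Fin (d - 1) → Fin (n + 1)) (P : Fin (n + 2) → ℝ) : Fin (d - 1) → ℝ :=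
  fun i => (d : ℝ) ^ ((⌊logb d (h i)⌋ : ℝ) + P (r i).castSucc)

noncomputable def orderSimplexOfHeight (d : ℕ) (h : Fin (d - 1) → ℝ)
    (rep : Fin (n + 1) → Fin (d - 1)) (h' : Fin (d - 1) → ℝ) : Fin (n + 2) → ℝ :=
  Fin.snoc (fun k => logb d (h' (rep k)) - ⌊logb d (h (rep k))⌋) 1

lemma rank_first_eq_zero (hP : h ∈ Pd d hd)
    (hr : ∀ i j, r i < r j ↔ Int.fract (logb d (h i)) < Int.fract (logb d (h j)))
    (hrep : RightInverse rep r) : r ⟨0, by omega⟩ = 0 := by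
  refine Fin.le_zero_iff.mp (not_lt.mp fun hlt => ?_)
  have := (hr (rep 0) ⟨0, by omega⟩).mp (by rwa [hrep 0])
  rw [hP.1, logb_one, Int.fract_zero] at this
  exact (Int.fract_nonneg _).not_gt this

lemma logb_heightOfOrderSimplex (hd : 2 ≤ d) (P : Fin (n + 2) → ℝ) (i : Fin (d - 1)) :
    logb d (heightOfOrderSimplex d h r P i) = ⌊logb d (h i)⌋ + P (r i).castSucc :=
  logb_rpow (Nat.cast_pos.mpr (by omega)) (Nat.one_lt_cast.mpr hd).ne'

lemma fract_logb_heightOfOrderSimplex (hd : 2 ≤ d) {P : Fin (n + 2) → ℝ}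
    (hP : P ∈ orderSimplex (n + 1)) (i : Fin (d - 1)) :
    Int.fract (logb d (heightOfOrderSimplex d h r P i)) = P (r i).castSucc := by
  rw [logb_heightOfOrderSimplex hd, Int.fract_intCast_add,
    Int.fract_eq_self.mpr (mem_Ico_of_mem_orderSimplex hP _)]

lemma floorFractType_heightOfOrderSimplex (hd : 2 ≤ d)
    (hr : ∀ i j, r i < r j ↔ Int.fract (logb d (h i)) < Int.fract (logb d (h j)))
    {P : Fin (n + 2) → ℝ} (hP : P ∈ orderSimplex (n + 1)) :
    floorFractType (logb d ∘ heightOfOrderSimplex d h r P) = floorFractType (logb d ∘ h) := by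
  refine floorFractType_eq_iff.mpr ⟨fun i => ?_, fun i j => ?_⟩
  · change ⌊logb d (heightOfOrderSimplex d h r P i)⌋ = _
    rw [logb_heightOfOrderSimplex hd, Int.floor_intCast_add,
      Int.floor_eq_zero_iff.mpr (mem_Ico_of_mem_orderSimplex hP _), add_zero, comp_apply]
  · change Int.fract (logb d (heightOfOrderSimplex d h r P i)) <
      Int.fract (logb d (heightOfOrderSimplex d h r P j)) ↔ _
    rw [fract_logb_heightOfOrderSimplex hd hP, fract_logb_heightOfOrderSimplex hd hP,
      hP.1.lt_iff_lt, Fin.castSucc_lt_castSucc_iff, hr]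
    rfl

lemma heightOfOrderSimplex_mem_typeFibre (hh : h ∈ stratum d hd (n + 1))
    (hr : ∀ i j, r i < r j ↔ Int.fract (logb d (h i)) < Int.fract (logb d (h j)))
    (hrep : RightInverse rep r) {P : Fin (n + 2) → ℝ} (hP : P ∈ orderSimplex (n + 1)) :
    heightOfOrderSimplex d h r P ∈ typeFibre d hd (n + 1) h := by
  have hT := floorFractType_heightOfOrderSimplex hd hr hP
  have hpos i : 0 < heightOfOrderSimplex d h r P i :=
    rpow_pos_of_pos (Nat.cast_pos.mpr (by omega)) _
  refine ⟨mem_stratum_of_floorFractType_eq hh hpos hT ?_, hT⟩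
  rw [fract_logb_heightOfOrderSimplex hd hP, rank_first_eq_zero (mem_stratum_iff.mp hh).1 hr hrep,
    Fin.castSucc_zero, hP.2.1]

lemma floor_logb_eq_of_mem_typeFibre (hF : h' ∈ typeFibre d hd N h) (i : Fin (d - 1)) :
    ⌊logb d (h' i)⌋ = ⌊logb d (h i)⌋ :=
  (floorFractType_eq_iff.mp hF.2).1 i

lemma sub_floor_eq_fract_of_mem_typeFibre (hF : h' ∈ typeFibre d hd N h) (i : Fin (d - 1)) :
    logb d (h' i) - ⌊logb d (h i)⌋ = Int.fract (logb d (h' i)) := by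
  rw [Int.fract, floor_logb_eq_of_mem_typeFibre hF]

lemma rank_lt_iff_of_mem_typeFibre
    (hr : ∀ i j, r i < r j ↔ Int.fract (logb d (h i)) < Int.fract (logb d (h j)))
    (hF : h' ∈ typeFibre d hd N h) (i j : Fin (d - 1)) :
    r i < r j ↔ Int.fract (logb d (h' i)) < Int.fract (logb d (h' j)) :=
  (hr i j).trans ((floorFractType_eq_iff.mp hF.2).2 i j).symm

lemma orderSimplexOfHeight_mem_orderSimplex (hh : h ∈ stratum d hd (n + 1))
    (hr : ∀ i j, r i < r j ↔ Int.fract (logb d (h i)) < Int.fract (logb d (h j)))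
    (hrep : RightInverse rep r) (hF : h' ∈ typeFibre d hd (n + 1) h) :
    orderSimplexOfHeight d h rep h' ∈ orderSimplex (n + 1) := by
  have hr' := rank_lt_iff_of_mem_typeFibre hr hF
  have hσ := fun k => sub_floor_eq_fract_of_mem_typeFibre hF (rep k)
  have hmono : StrictMono fun k => logb d (h' (rep k)) - ⌊logb d (h (rep k))⌋ := fun k l hkl => by
    simp only [hσ]
    rwa [← hr', hrep, hrep]
  refine ⟨?_, ?_, Fin.snoc_last _ _⟩
  · rw [orderSimplexOfHeight, ← Fin.insertNth_last']
    exact Fin.strictMono_insertNth_last hmono 1 (by simp only [hσ]; exact Int.fract_lt_one _)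
  · -- `rep 0` lies in the class of the first index, where `h' = 1`
    have h₀ := (eq_iff_eq_of_lt_iff_lt hr' (rep 0) ⟨0, by omega⟩).mp
      (by rw [hrep, rank_first_eq_zero (mem_stratum_iff.mp hh).1 hr hrep])
    rw [(mem_stratum_iff.mp hF.1).1.1, logb_one, Int.fract_zero] at h₀
    rw [orderSimplexOfHeight, ← Fin.castSucc_zero, Fin.snoc_castSucc, hσ, h₀]

lemma orderSimplexOfHeight_heightOfOrderSimplex (hd : 2 ≤ d) (hrep : RightInverse rep r)
    {P : Fin (n + 2) → ℝ} (hP : P ∈ orderSimplex (n + 1)) :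
    orderSimplexOfHeight d h rep (heightOfOrderSimplex d h r P) = P := by
  have hinit : (fun k => logb d (heightOfOrderSimplex d h r P (rep k)) - ⌊logb d (h (rep k))⌋)
      = Fin.init P := funext fun k => by
    rw [logb_heightOfOrderSimplex hd, hrep, add_sub_cancel_left, Fin.init]
  rw [orderSimplexOfHeight, hinit, ← hP.2.2, Fin.snoc_init_self]

lemma heightOfOrderSimplex_orderSimplexOfHeight (hd : 2 ≤ d)
    (hr : ∀ i j, r i < r j ↔ Int.fract (logb d (h i)) < Int.fract (logb d (h j)))
    (hrep : RightInverse rep r) (hF : h' ∈ typeFibre d hd N h) :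
    heightOfOrderSimplex d h r (orderSimplexOfHeight d h rep h') = h' := by
  funext i
  have hclass := (eq_iff_eq_of_lt_iff_lt (rank_lt_iff_of_mem_typeFibre hr hF) (rep (r i)) i).mp
    (hrep (r i))
  rw [heightOfOrderSimplex, orderSimplexOfHeight, Fin.snoc_castSucc,
    sub_floor_eq_fract_of_mem_typeFibre hF, hclass, ← floor_logb_eq_of_mem_typeFibre hF,
    Int.floor_add_fract, rpow_logb (Nat.cast_pos.mpr (by omega)) (Nat.one_lt_cast.mpr hd).ne'
      ((mem_stratum_iff.mp hF.1).1.2.2 i)]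

lemma continuous_heightOfOrderSimplex (hd : 2 ≤ d) :
    Continuous (heightOfOrderSimplex (n := n) d h r) :=
  continuous_pi fun _ => continuous_const.rpow (continuous_const.add (continuous_apply _))
    fun _ => Or.inl (Nat.cast_ne_zero.mpr (by omega))

lemma continuous_orderSimplexOfHeight :
    Continuous fun h' : typeFibre d hd N h => orderSimplexOfHeight d h rep h'.1 :=
  (continuous_pi fun k => ((((continuous_apply (rep k)).comp continuous_subtype_val).logb
    fun h' => ((mem_stratum_iff.mp h'.2.1).1.2.2 _).ne').sub continuous_const)).finSnoc
    continuous_const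

noncomputable def orderSimplexHomeomorphTypeFibre (hh : h ∈ stratum d hd (n + 1))
    (hr : ∀ i j, r i < r j ↔ Int.fract (logb d (h i)) < Int.fract (logb d (h j)))
    (hrep : RightInverse rep r) : orderSimplex (n + 1) ≃ₜ typeFibre d hd (n + 1) h where
  toFun P := ⟨heightOfOrderSimplex d h r P, heightOfOrderSimplex_mem_typeFibre hh hr hrep P.2⟩
  invFun h' :=
    ⟨orderSimplexOfHeight d h rep h', orderSimplexOfHeight_mem_orderSimplex hh hr hrep h'.2⟩
  left_inv P := Subtype.ext (orderSimplexOfHeight_heightOfOrderSimplex hd hrep P.2)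
  right_inv h' := Subtype.ext (heightOfOrderSimplex_orderSimplexOfHeight hd hr hrep h'.2)
  continuous_toFun :=
    ((continuous_heightOfOrderSimplex hd).comp continuous_subtype_val).subtype_mk _
  continuous_invFun := continuous_orderSimplexOfHeight.subtype_mk _

end Parametrization

end ShiftLocus

theorem stratum_components_homeomorphic_to_open_simplex_general (d N : ℕ) (hd : 2 ≤ d) :
    ∀ h ∈ stratum d hd N,
      Nonempty (↥(connectedComponentIn (stratum d hd N) h) ≃ₜ
        ↥{x : Fin N → ℝ | (∀ i, 0 < x i) ∧ ∑ i, x i = 1}) := by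
  intro h hh
  obtain ⟨r, hsurj, hr⟩ := ShiftLocus.exists_rank (ShiftLocus.mem_stratum_iff.mp hh).2
  obtain ⟨n, rfl⟩ : ∃ n, N = n + 1 := Nat.exists_eq_succ_of_ne_zero (r ⟨0, by omega⟩).pos.ne'
  let e := (ShiftLocus.openSimplexHomeomorphOrderSimplex (n + 1)).trans
    (ShiftLocus.orderSimplexHomeomorphTypeFibre hh hr (rightInverse_surjInv hsurj))
  have : PreconnectedSpace (ShiftLocus.openSimplex (n + 1)) :=
    Subtype.preconnectedSpace ShiftLocus.convex_openSimplex.isPreconnected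
  have hconn : IsPreconnected (ShiftLocus.typeFibre d hd (n + 1) h) :=
    isPreconnected_iff_preconnectedSpace.mpr
      (e.surjective.denseRange.preconnectedSpace e.continuous)
  rw [ShiftLocus.connectedComponentIn_stratum_eq_typeFibre hh hconn]
  exact ⟨e.symm⟩

/-- Every connected component of the stratum `P_d^N` (subspace topology
from `ℝ^{d−1}`) is homeomorphic to the open standard `(N−1)`-simplex
`σ_N = {x ∈ ℝ^N : xᵢ > 0 ∀ i, ∑ xᵢ = 1}`. -/
theorem stratum_components_homeomorphic_to_open_simplex (d N : ℕ) (hd : 2 ≤ d)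
    (hN1 : 1 ≤ N) (hNd : N ≤ d - 1) :
    ∀ h ∈ stratum d hd N,
      Nonempty (↥(connectedComponentIn (stratum d hd N) h) ≃ₜ
        ↥{x : Fin N → ℝ | (∀ i, 0 < x i) ∧ ∑ i, x i = 1}) :=
  stratum_components_homeomorphic_to_open_simplex_general d N hd
end

section
/- Let d ≥ 2 and let P_d = {h ∈ ℝ^{d−1} : 1 = h₁ ≥ h₂ ≥ ⋯ ≥ h_{d−1} > 0}. The stratification of P_d by the strata P_d^N, 1 ≤ N ≤ d−1, is locally finite: every point h ∈ P_d has an open neighborhood U in P_d (subspace topology) such that U meets only finitely many connected components of the strata P_d^N, taken over all N. -/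
/-!
Work in logarithmic coordinates `uᵢ = log xᵢ`, where `xᵢ ∼ xⱼ` means `uᵢ - uⱼ ∈ ℤ · log d`.
On the neighbourhood `|uᵢ - log hᵢ| < log d / 4` of `h`, the only multiple of `log d` that
`uᵢ - uⱼ` can hit is `nᵢⱼ log d`, with `nᵢⱼ` the integer nearest to `log (hᵢ / hⱼ) / log d`.
So the dependence relation, and hence the stratum, is constant on each set where the signs of
all `uᵢ - uⱼ - nᵢⱼ log d` are prescribed. These finitely many sets are convex in `u`, hence
connected, and every component of a stratum meeting the neighbourhood contains one of them.
-/

open Real Set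

section FiberComponents

variable {X ι κ : Type*} [TopologicalSpace X] {A U : Set X} {f : X → ι}

theorem connectedComponentIn_fiber_eq_of_isPreconnected {P : Set X} (hP : IsPreconnected P)
    (hPA : P ⊆ A) (hf : ∀ x ∈ P, ∀ y ∈ P, f x = f y) {x y : X} (hx : x ∈ P) (hy : y ∈ P) :
    connectedComponentIn {z ∈ A | f z = f x} x = connectedComponentIn {z ∈ A | f z = f y} y := by
  have hfiber : P ⊆ {z ∈ A | f z = f x} := fun z hz => ⟨hPA hz, hf z hz x hx⟩
  rw [hf y hy x hx]
  exact connectedComponentIn_eq (hP.subset_connectedComponentIn hx hfiber hy)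

theorem finite_setOf_connectedComponentIn_fiber_inter_nonempty [Finite κ] (P : κ → Set X)
    (hP : ∀ k, IsPreconnected (P k)) (hPA : ∀ k, P k ⊆ A)
    (hf : ∀ k, ∀ x ∈ P k, ∀ y ∈ P k, f x = f y) (hcover : A ∩ U ⊆ ⋃ k, P k) :
    {s : Set X | ∃ N x, s = connectedComponentIn {z ∈ A | f z = N} x ∧
      (s ∩ U).Nonempty}.Finite := by
  refine (finite_iUnion fun k => Subsingleton.finite
    (s := {s | ∃ x ∈ P k, s = connectedComponentIn {z ∈ A | f z = f x} x}) ?_).subset ?_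
  · rintro _ ⟨x, hx, rfl⟩ _ ⟨y, hy, rfl⟩
    exact connectedComponentIn_fiber_eq_of_isPreconnected (hP k) (hPA k) (hf k) hx hy
  · rintro s ⟨N, x, rfl, y, hys, hyU⟩
    obtain ⟨hyA, rfl⟩ := connectedComponentIn_subset _ _ hys
    obtain ⟨k, hk⟩ := mem_iUnion.1 (hcover ⟨hyA, hyU⟩)
    exact mem_iUnion.2 ⟨k, y, hk, connectedComponentIn_eq hys⟩

end FiberComponents

theorem convex_setOf_sign_sub_eq {E : Type*} [AddCommGroup E] [Module ℝ E] (g : E →ₗ[ℝ] ℝ)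
    (a : ℝ) (c : SignType) : Convex ℝ {u | SignType.sign (g u - a) = c} := by
  cases c
  · simpa only [SignType.zero_eq_zero, _root_.sign_eq_zero_iff, sub_eq_zero] using
      convex_hyperplane g.isLinear a
  · simpa only [SignType.neg_eq_neg_one, _root_.sign_eq_neg_one_iff, sub_neg] using
      convex_halfSpace_lt g.isLinear a
  · simpa only [SignType.pos_eq_one, _root_.sign_eq_one_iff, sub_pos] using
      convex_halfSpace_gt g.isLinear a

theorem convex_setOf_forall_sign_sub_eq {ι : Type*} (a : ι × ι → ℝ) (c : ι × ι → SignType) :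
    Convex ℝ {u : ι → ℝ | ∀ p, SignType.sign (u p.1 - u p.2 - a p) = c p} := by
  rw [ofPred_forall]
  exact convex_iInter fun p =>
    convex_setOf_sign_sub_eq
      (LinearMap.proj (R := ℝ) (φ := fun _ : ι => ℝ) p.1 - LinearMap.proj p.2) (a p) (c p)

theorem abs_sub_round_div_mul_le (t : ℝ) {L : ℝ} (hL : 0 < L) :
    |t - round (t / L) * L| ≤ L / 2 := by
  have h := abs_sub_round (t / L)
  rw [show t - round (t / L) * L = (t / L - round (t / L)) * L by field_simp, abs_mul,
    abs_of_pos hL]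
  nlinarith

theorem degDep_iff_log_sub_eq {d : ℕ} (hd : 1 < d) {a b : ℝ} (ha : 0 < a) (hb : 0 < b) (n : ℤ)
    (hn : |log a - log b - n * log d| < log d) :
    DegDep d a b ↔ log a - log b = n * log d := by
  have hd0 : (0 : ℝ) < d := by positivity
  constructor
  · rintro ⟨m, rfl⟩
    have hlog : log ((d : ℝ) ^ m * b) - log b = m * log d := by
      rw [log_mul (zpow_ne_zero _ hd0.ne') hb.ne', log_zpow, add_sub_cancel_right]
    rw [hlog] at hn ⊢
    have hL : 0 < log d := log_pos (by exact_mod_cast hd)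
    have hmn : |((m - n : ℤ) : ℝ)| < 1 := by
      refine lt_of_mul_lt_mul_right ?_ hL.le
      rwa [one_mul, ← abs_of_pos hL, ← abs_mul, abs_of_pos hL, Int.cast_sub, sub_mul]
    obtain rfl : m = n := by
      have := Int.abs_lt_one_iff.1 (by exact_mod_cast hmn)
      omega
    rfl
  · intro hlog
    refine ⟨n, ?_⟩
    rw [← exp_log ha, ← exp_log hb, ← exp_log (zpow_pos hd0 n), ← exp_add, log_zpow]
    congr 1
    linarith

section LogCoordinates

variable {ι : Type*}

noncomputable def nearestExponent (d : ℕ) (h : ι → ℝ) (i j : ι) : ℤ :=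
  round ((log (h i) - log (h j)) / log d)

noncomputable def signPattern (d : ℕ) (h x : ι → ℝ) (p : ι × ι) : SignType :=
  SignType.sign (log (x p.1) - log (x p.2) - nearestExponent d h p.1 p.2 * log d)

noncomputable def logNbhd [Fintype ι] (d : ℕ) (h : ι → ℝ) : Set (ι → ℝ) :=
  {x | ∀ i, 0 < x i} ∩ (fun x i => log (x i)) ⁻¹' Metric.ball (fun i => log (h i)) (log d / 4)

theorem isOpen_logNbhd [Fintype ι] (d : ℕ) (h : ι → ℝ) : IsOpen (logNbhd d h) := by
  refine ContinuousOn.isOpen_inter_preimage ?_ ?_ Metric.isOpen_ball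
  · exact continuousOn_pi.2 fun i =>
      continuousOn_log.comp (continuous_apply i).continuousOn fun x hx => (hx i).ne'
  · simp only [ofPred_forall]
    exact isOpen_iInter_of_finite fun i => isOpen_lt continuous_const (continuous_apply i)

theorem self_mem_logNbhd [Fintype ι] {d : ℕ} (hd : 1 < d) {h : ι → ℝ} (hh : ∀ i, 0 < h i) :
    h ∈ logNbhd d h :=
  ⟨hh, Metric.mem_ball_self (by have := log_pos (by exact_mod_cast hd : (1 : ℝ) < d); positivity)⟩

theorem degDep_iff_signPattern_eq_zero [Fintype ι] {d : ℕ} (hd : 1 < d) {h x : ι → ℝ}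
    (hx : x ∈ logNbhd d h) (i j : ι) :
    DegDep d (x i) (x j) ↔ signPattern d h x (i, j) = 0 := by
  have hL : 0 < log d := log_pos (by exact_mod_cast hd)
  have hclose : ∀ k, |log (x k) - log (h k)| < log d / 4 := fun k =>
    (dist_pi_lt_iff (by positivity)).1 hx.2 k
  have hround : |log (h i) - log (h j) - nearestExponent d h i j * log d| ≤ log d / 2 :=
    abs_sub_round_div_mul_le _ hL
  have htri := abs_add_three (log (x i) - log (h i)) (log (h j) - log (x j))
    (log (h i) - log (h j) - nearestExponent d h i j * log d)
  rw [abs_sub_comm (log (h j))] at htri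
  rw [signPattern, _root_.sign_eq_zero_iff, sub_eq_zero]
  refine degDep_iff_log_sub_eq hd (hx.1 i) (hx.1 j) _ ?_
  calc |log (x i) - log (x j) - nearestExponent d h i j * log d|
      = |log (x i) - log (h i) + (log (h j) - log (x j))
          + (log (h i) - log (h j) - nearestExponent d h i j * log d)| := by ring_nf
    _ < log d := by linarith [hclose i, hclose j, hround]

-- `stratum d hd N` is by definition the fibre `{x ∈ Pd d hd | depClassCount d x = N}`.
noncomputable def depClassCount (d : ℕ) (x : ι → ℝ) : ℕ :=
  {s : Set ι | ∃ i, s = {j | DegDep d (x i) (x j)}}.ncard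

end LogCoordinates

theorem convex_preimage_exp_Pd {d : ℕ} (hd : 2 ≤ d) :
    Convex ℝ ((fun (u : Fin (d - 1) → ℝ) i => exp (u i)) ⁻¹' Pd d hd) := by
  rintro u ⟨hu0, hu, -⟩ v ⟨hv0, hv, -⟩ a b ha hb -
  simp only [exp_eq_one_iff, exp_le_exp] at hu0 hu hv0 hv
  refine ⟨?_, fun i j hij => ?_, fun i => exp_pos _⟩
  · simp [hu0, hv0]
  · simp only [Pi.add_apply, Pi.smul_apply, smul_eq_mul, exp_le_exp]
    gcongr
    exacts [hu i j hij, hv i j hij]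

noncomputable def piece (d : ℕ) (hd : 2 ≤ d) (h : Fin (d - 1) → ℝ)
    (c : Fin (d - 1) × Fin (d - 1) → SignType) : Set (Fin (d - 1) → ℝ) :=
  logNbhd d h ∩ Pd d hd ∩ {x | signPattern d h x = c}

theorem isPreconnected_piece {d : ℕ} (hd : 2 ≤ d) (h : Fin (d - 1) → ℝ)
    (c : Fin (d - 1) × Fin (d - 1) → SignType) : IsPreconnected (piece d hd h c) := by
  set E : (Fin (d - 1) → ℝ) → Fin (d - 1) → ℝ := fun u i => exp (u i)
  have hrange : piece d hd h c ⊆ range E := fun x hx =>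
    ⟨fun i => log (x i), funext fun i => exp_log (hx.1.1.1 i)⟩
  have hball : E ⁻¹' logNbhd d h = Metric.ball (fun i => log (h i)) (log d / 4) := by
    ext u
    simp [E, logNbhd, exp_pos]
  have hsign : E ⁻¹' {x | signPattern d h x = c} =
      {u | ∀ p, SignType.sign (u p.1 - u p.2 - nearestExponent d h p.1 p.2 * log d) = c p} := by
    ext u
    simp [E, signPattern, funext_iff]
  rw [← image_preimage_eq_of_subset hrange]
  refine (Convex.isPreconnected ?_).image _ (continuous_pi fun i =>
    continuous_exp.comp (continuous_apply i)).continuousOn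
  rw [piece, preimage_inter, preimage_inter, hball, hsign]
  exact ((convex_ball _ _).inter (convex_preimage_exp_Pd hd)).inter
    (convex_setOf_forall_sign_sub_eq _ c)

theorem depClassCount_eq_of_mem_piece {d : ℕ} (hd : 2 ≤ d) {h : Fin (d - 1) → ℝ}
    {c : Fin (d - 1) × Fin (d - 1) → SignType} {x y : Fin (d - 1) → ℝ}
    (hx : x ∈ piece d hd h c) (hy : y ∈ piece d hd h c) :
    depClassCount d x = depClassCount d y := by
  simp only [depClassCount, degDep_iff_signPattern_eq_zero hd hx.1.1,
    degDep_iff_signPattern_eq_zero hd hy.1.1]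
  rw [hx.2, hy.2]

/-- The stratification of `P_d` by the strata `P_d^N`, `1 ≤ N ≤ d−1`, is
locally finite: every `h ∈ P_d` has an open neighborhood `U` meeting only finitely many
connected components of the strata. -/
theorem stratification_locally_finite (d : ℕ) (hd : 2 ≤ d) :
    ∀ h ∈ Pd d hd, ∃ U : Set (Fin (d - 1) → ℝ), IsOpen U ∧ h ∈ U ∧
      {s : Set (Fin (d - 1) → ℝ) | ∃ N : ℕ, 1 ≤ N ∧ N ≤ d - 1 ∧
        ∃ x ∈ stratum d hd N,
          s = connectedComponentIn (stratum d hd N) x ∧ (s ∩ U).Nonempty}.Finite := by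
  intro h hh
  refine ⟨logNbhd d h, isOpen_logNbhd d h, self_mem_logNbhd hd hh.2.2, ?_⟩
  have hfinite := finite_setOf_connectedComponentIn_fiber_inter_nonempty (f := depClassCount d)
    (piece d hd h) (isPreconnected_piece hd h) (fun c _ hx => hx.1.2)
    (fun c _ hx _ hy => depClassCount_eq_of_mem_piece hd hx hy)
    (fun x hx => mem_iUnion.2 ⟨signPattern d h x, ⟨hx.2, hx.1⟩, rfl⟩)
  refine hfinite.subset ?_
  rintro s ⟨N, -, -, x, -, hs, hsU⟩
  exact ⟨N, x, hs, hsU⟩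
end
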